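/- Suppose z = p/q with p, q ∈ 𝒪 and q ≠ 0. Then every run of the continued fraction algorithm on input z has finite length, and any run of finite length N satisfies ε^N·|q| ≥ 1 (equivalently, N ≤ log|q| / log(1/ε)); in particular, no infinite run on input z exists. -/

import Mathlib

/-!
Write `E_n = q_n z - p_n`. The recursions keep the invariant `z_n E_n + E_{n-1} = 0`, which turns
the three-term recursion for `E_n` into `b_{n-1} E_n = -(b_n z_{n-1} - a_n) E_{n-1}`. The step
condition `|b_n z_{n-1} - a_n| ≤ ε |b_{n-1}|` then gives `0 < |E_n| ≤ ε^n`. For `z = p/q` the number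
`q E_n = q_n p - p_n q` is a nonzero element of `𝒪`, and the norm form of `𝒪` is integral
(this is where `Δ ≡ 0, 1 mod 4` enters), so `1 ≤ |q E_n| ≤ ε^n |q|` for every `n ≤ N`. As `ε < 1`,
this bounds `N`.
-/

noncomputable section

namespace CFNE

/-- τ = (Δ + i·√|Δ|)/2. -/
def tau (Δ : ℤ) : ℂ := ((Δ : ℂ) + Complex.I * (Real.sqrt |(Δ : ℝ)|)) / 2

/-- The imaginary quadratic order 𝒪 = ℤ[τ] of discriminant Δ, as a subring of ℂ. -/
def O (Δ : ℤ) : Subring ℂ := Subring.closure {tau Δ}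

/-- A (nonzero or zero) ideal of 𝒪, presented as a subset of ℂ. -/
structure IdealS (Δ : ℤ) where
  carrier : Set ℂ
  subset : carrier ⊆ (O Δ : Set ℂ)
  zero_mem : (0 : ℂ) ∈ carrier
  add_mem : ∀ x ∈ carrier, ∀ y ∈ carrier, x + y ∈ carrier
  neg_mem : ∀ x ∈ carrier, -x ∈ carrier
  smul_mem : ∀ r ∈ (O Δ : Set ℂ), ∀ x ∈ carrier, r * x ∈ carrier

/-- The ideal as an additive subgroup of ℂ. -/
def IdealS.toAddSubgroup {Δ : ℤ} (I : IdealS Δ) : AddSubgroup ℂ where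
  carrier := I.carrier
  zero_mem' := I.zero_mem
  add_mem' := fun hx hy => I.add_mem _ hx _ hy
  neg_mem' := fun hx => I.neg_mem _ hx

/-- The norm of an ideal: the index [𝒪 : 𝔟]. -/
def IdealS.norm {Δ : ℤ} (I : IdealS Δ) : ℕ :=
  I.toAddSubgroup.relIndex (O Δ).toAddSubgroup

/-- The ideal is nonzero. -/
def IdealS.Nonzero {Δ : ℤ} (I : IdealS Δ) : Prop := ∃ x ∈ I.carrier, x ≠ 0

/-- Two nonzero ideals lie in the same class if x·𝔞 = y·𝔟 for some nonzero x, y ∈ 𝒪. -/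
def SameClass {Δ : ℤ} (I J : IdealS Δ) : Prop :=
  ∃ x ∈ (O Δ : Set ℂ), ∃ y ∈ (O Δ : Set ℂ), x ≠ 0 ∧ y ≠ 0 ∧
    (fun t => x * t) '' I.carrier = (fun t => y * t) '' J.carrier

/-- A reduced ideal: a nonzero ideal of minimal norm in its ideal class. -/
def IsReduced {Δ : ℤ} (I : IdealS Δ) : Prop :=
  I.Nonzero ∧ ∀ J : IdealS Δ, J.Nonzero → SameClass I J → I.norm ≤ J.norm

/-- The inverse fractional ideal 𝔟⁻¹ = {x ∈ ℂ : x·𝔟 ⊆ 𝒪}. -/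
def invSet {Δ : ℤ} (I : IdealS Δ) : Set ℂ :=
  {x : ℂ | ∀ y ∈ I.carrier, x * y ∈ (O Δ : Set ℂ)}

/-- The fractional ideal a·𝔟 + b·𝔟⁻¹, as a subset of ℂ. -/
def combSet {Δ : ℤ} (I : IdealS Δ) (a b : ℂ) : Set ℂ :=
  {u : ℂ | ∃ s ∈ I.carrier, ∃ t ∈ invSet I, u = a * s + b * t}

/-- The ideal x·𝒪 + y·𝒪 of 𝒪 generated by x and y, as a subset of ℂ. -/
def genSet (Δ : ℤ) (x y : ℂ) : Set ℂ :=
  {u : ℂ | ∃ s ∈ (O Δ : Set ℂ), ∃ t ∈ (O Δ : Set ℂ), u = x * s + y * t}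

/-- The set is the carrier of a reduced ideal of 𝒪. -/
def IsReducedSet (Δ : ℤ) (S : Set ℂ) : Prop :=
  ∃ J : IdealS Δ, IsReduced J ∧ J.carrier = S

/-- B is admissible with ε ∈ (0,1): B is a nonempty finite subset of 𝒪 ∖ {0}, and for every
reduced ideal 𝔟 with 𝔟 ∩ B ≠ ∅, the discs D(a/b, ε/|b|) over b ∈ 𝔟 ∩ B, a ∈ 𝔟⁻¹ with
a·𝔟 + b·𝔟⁻¹ reduced, cover ℂ. -/
def Admissible (Δ : ℤ) (B : Set ℂ) (ε : ℝ) : Prop :=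
  B.Nonempty ∧ B.Finite ∧ B ⊆ (O Δ : Set ℂ) ∧ (0 : ℂ) ∉ B ∧
  ∀ I : IdealS Δ, IsReduced I → (I.carrier ∩ B).Nonempty →
    ∀ z : ℂ, ∃ b ∈ I.carrier ∩ B, ∃ a ∈ invSet I,
      IsReducedSet Δ (combSet I a b) ∧ ‖z - a / b‖ ≤ ε / ‖b‖

/-- μ = max{|b| : b ∈ B}. -/
def mu (B : Set ℂ) : ℝ := sSup ((fun w : ℂ => ‖w‖) '' B)

/-- A run of the continued fraction algorithm of length N ∈ ℕ ∪ {∞} on input z. -/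
structure Run (Δ : ℤ) (B : Set ℂ) (ε : ℝ) (z : ℂ) (N : ℕ∞) where
  a : ℤ → ℂ
  b : ℤ → ℂ
  p : ℤ → ℂ
  q : ℤ → ℂ
  zs : ℤ → ℂ
  b_zero : b 0 = 1
  p_neg_one : p (-1) = 0
  q_neg_one : q (-1) = 1
  p_zero : p 0 = 1
  q_zero : q 0 = 0
  zs_zero : zs 0 = z
  ha : ∀ n : ℕ, 1 ≤ n → (n : ℕ∞) ≤ N → a n ∈ O Δ
  hb : ∀ n : ℕ, 1 ≤ n → (n : ℕ∞) ≤ N → b n ∈ B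
  hne : ∀ n : ℕ, 1 ≤ n → (n : ℕ∞) ≤ N → b n * zs ((n : ℤ) - 1) - a n ≠ 0
  hclose : ∀ n : ℕ, 1 ≤ n → (n : ℕ∞) ≤ N →
    ‖b n * zs ((n : ℤ) - 1) - a n‖ ≤ ε * ‖b ((n : ℤ) - 1)‖
  hp : ∀ n : ℕ, 1 ≤ n → (n : ℕ∞) ≤ N →
    p n = (a n * p ((n : ℤ) - 1) + b n * p ((n : ℤ) - 2)) / b ((n : ℤ) - 1)
  hq : ∀ n : ℕ, 1 ≤ n → (n : ℕ∞) ≤ N →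
    q n = (a n * q ((n : ℤ) - 1) + b n * q ((n : ℤ) - 2)) / b ((n : ℤ) - 1)
  hz : ∀ n : ℕ, 1 ≤ n → (n : ℕ∞) ≤ N →
    zs n = b ((n : ℤ) - 1) / (b n * zs ((n : ℤ) - 1) - a n)
  hpO : ∀ n : ℕ, 1 ≤ n → (n : ℕ∞) ≤ N → p n ∈ O Δ
  hqO : ∀ n : ℕ, 1 ≤ n → (n : ℕ∞) ≤ N → q n ∈ O Δ
  hred : ∀ n : ℕ, 1 ≤ n → (n : ℕ∞) ≤ N → IsReducedSet Δ (genSet Δ (p n) (q n))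

section Order

variable {Δ : ℤ}

lemma four_dvd_mul_sub_one (hΔmod : Δ % 4 = 0 ∨ Δ % 4 = 1) : 4 ∣ Δ * (Δ - 1) := by
  rcases hΔmod with h | h
  · exact (Int.dvd_of_emod_eq_zero h).mul_right _
  · exact (Int.dvd_of_emod_eq_zero (by omega)).mul_left _

lemma tau_re : (tau Δ).re = Δ / 2 := by
  simp [tau]

lemma tau_im : (tau Δ).im = √|(Δ : ℝ)| / 2 := by
  simp [tau]

lemma sq_sqrt_abs_of_nonpos (hΔ : Δ ≤ 0) : √|(Δ : ℝ)| ^ 2 = -Δ := by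
  rw [Real.sq_sqrt (abs_nonneg _), abs_of_nonpos (by exact_mod_cast hΔ)]

lemma tau_sq (hΔ : Δ ≤ 0) {k : ℤ} (hk : Δ * (Δ - 1) = 4 * k) :
    tau Δ ^ 2 = Δ * tau Δ - k := by
  have hk' : ((Δ : ℝ) * (Δ - 1)) = 4 * k := by exact_mod_cast hk
  apply Complex.ext <;> simp [pow_two, tau_re, tau_im]
  · linear_combination (-1 / 4 : ℝ) * sq_sqrt_abs_of_nonpos hΔ - (1 / 4 : ℝ) * hk'
  · ring

lemma exists_eq_add_mul_tau (hΔ : Δ ≤ 0) {k : ℤ} (hk : Δ * (Δ - 1) = 4 * k) {x : ℂ}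
    (hx : x ∈ O Δ) : ∃ m n : ℤ, x = m + n * tau Δ := by
  induction hx using Subring.closure_induction with
  | mem y hy => exact ⟨0, 1, by simp [Set.mem_singleton_iff.1 hy]⟩
  | zero => exact ⟨0, 0, by simp⟩
  | one => exact ⟨1, 0, by simp⟩
  | add x y _ _ hx hy =>
    obtain ⟨m, n, rfl⟩ := hx
    obtain ⟨m', n', rfl⟩ := hy
    exact ⟨m + m', n + n', by push_cast; ring⟩
  | neg x _ hx =>
    obtain ⟨m, n, rfl⟩ := hx
    exact ⟨-m, -n, by push_cast; ring⟩
  | mul x y _ _ hx hy =>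
    obtain ⟨m, n, rfl⟩ := hx
    obtain ⟨m', n', rfl⟩ := hy
    refine ⟨m * m' - n * n' * k, m * n' + n * m' + n * n' * Δ, ?_⟩
    push_cast
    linear_combination (n * n' : ℂ) * tau_sq hΔ hk

lemma normSq_add_mul_tau (hΔ : Δ ≤ 0) {k : ℤ} (hk : Δ * (Δ - 1) = 4 * k) (m n : ℤ) :
    Complex.normSq (m + n * tau Δ) = ((m ^ 2 + m * n * Δ + n ^ 2 * k : ℤ) : ℝ) := by
  have hk' : ((Δ : ℝ) * (Δ - 1)) = 4 * k := by exact_mod_cast hk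
  simp [Complex.normSq_apply, tau_re, tau_im]
  linear_combination ((n : ℝ) ^ 2 / 4) * sq_sqrt_abs_of_nonpos hΔ + ((n : ℝ) ^ 2 / 4) * hk'

lemma one_le_norm_of_mem_O (hΔ : Δ ≤ 0) (hΔmod : Δ % 4 = 0 ∨ Δ % 4 = 1) {x : ℂ}
    (hx : x ∈ O Δ) (hx0 : x ≠ 0) : 1 ≤ ‖x‖ := by
  obtain ⟨k, hk⟩ := four_dvd_mul_sub_one hΔmod
  obtain ⟨m, n, rfl⟩ := exists_eq_add_mul_tau hΔ hk hx
  have hpos := Complex.normSq_pos.2 hx0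
  rw [normSq_add_mul_tau hΔ hk, Int.cast_pos] at hpos
  have h1 : 1 ≤ ‖(m : ℂ) + n * tau Δ‖ ^ 2 := by
    rw [← Complex.normSq_eq_norm_sq, normSq_add_mul_tau hΔ hk]
    exact_mod_cast hpos
  nlinarith [norm_nonneg ((m : ℂ) + n * tau Δ)]

end Order

namespace Run

variable {Δ : ℤ} {B : Set ℂ} {ε : ℝ} {z : ℂ} {N : ℕ∞} (R : Run Δ B ε z N) {n : ℕ}

lemma rem_succ_ne_zero (hn : ((n + 1 : ℕ) : ℕ∞) ≤ N) :
    R.b (n + 1) * R.zs n - R.a (n + 1) ≠ 0 := by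
  simpa using R.hne (n + 1) n.succ_pos hn

lemma norm_rem_succ_le (hn : ((n + 1 : ℕ) : ℕ∞) ≤ N) :
    ‖R.b (n + 1) * R.zs n - R.a (n + 1)‖ ≤ ε * ‖R.b n‖ := by
  simpa using R.hclose (n + 1) n.succ_pos hn

lemma p_succ (hn : ((n + 1 : ℕ) : ℕ∞) ≤ N) :
    R.p (n + 1) = (R.a (n + 1) * R.p n + R.b (n + 1) * R.p (n - 1)) / R.b n := by
  have h := R.hp (n + 1) n.succ_pos hn
  rw [show ((n + 1 : ℕ) : ℤ) - 2 = n - 1 by omega] at h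
  simpa using h

lemma q_succ (hn : ((n + 1 : ℕ) : ℕ∞) ≤ N) :
    R.q (n + 1) = (R.a (n + 1) * R.q n + R.b (n + 1) * R.q (n - 1)) / R.b n := by
  have h := R.hq (n + 1) n.succ_pos hn
  rw [show ((n + 1 : ℕ) : ℤ) - 2 = n - 1 by omega] at h
  simpa using h

lemma zs_succ (hn : ((n + 1 : ℕ) : ℕ∞) ≤ N) :
    R.zs (n + 1) = R.b n / (R.b (n + 1) * R.zs n - R.a (n + 1)) := by
  simpa using R.hz (n + 1) n.succ_pos hn

lemma b_ne_zero (hn : ((n + 1 : ℕ) : ℕ∞) ≤ N) : R.b n ≠ 0 := by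
  intro hb
  have h := R.norm_rem_succ_le hn
  rw [hb, norm_zero, mul_zero, norm_le_zero_iff] at h
  exact R.rem_succ_ne_zero hn h

def err (n : ℤ) : ℂ := R.q n * z - R.p n

lemma err_zero : R.err 0 = -1 := by
  simp [err, R.p_zero, R.q_zero]

lemma err_neg_one : R.err (-1) = z := by
  simp [err, R.p_neg_one, R.q_neg_one]

lemma b_mul_err_succ_of_zs_mul_err (hn : ((n + 1 : ℕ) : ℕ∞) ≤ N)
    (h : R.zs n * R.err n + R.err (n - 1) = 0) :
    R.b n * R.err (n + 1) = -(R.b (n + 1) * R.zs n - R.a (n + 1)) * R.err n := by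
  have hb := R.b_ne_zero hn
  have hrec : R.b n * R.err (n + 1) = R.a (n + 1) * R.err n + R.b (n + 1) * R.err (n - 1) := by
    simp only [err, R.p_succ hn, R.q_succ hn]
    field_simp
    ring
  linear_combination hrec + R.b (n + 1) * h

lemma zs_mul_err_add_err (hn : (n : ℕ∞) ≤ N) : R.zs n * R.err n + R.err (n - 1) = 0 := by
  induction n with
  | zero => simp [R.zs_zero, R.err_zero, R.err_neg_one]
  | succ n ih =>
    have hstep := R.b_mul_err_succ_of_zs_mul_err hn (ih (le_trans (by simp) hn))
    have hrem := R.rem_succ_ne_zero hn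
    push_cast
    rw [R.zs_succ hn, add_sub_cancel_right]
    field_simp
    linear_combination hstep

lemma b_mul_err_succ (hn : ((n + 1 : ℕ) : ℕ∞) ≤ N) :
    R.b n * R.err (n + 1) = -(R.b (n + 1) * R.zs n - R.a (n + 1)) * R.err n :=
  R.b_mul_err_succ_of_zs_mul_err hn (R.zs_mul_err_add_err (le_trans (by simp) hn))

lemma err_ne_zero (hn : (n : ℕ∞) ≤ N) : R.err n ≠ 0 := by
  induction n with
  | zero => simp [R.err_zero]
  | succ n ih =>
    have h := R.b_mul_err_succ hn
    have hne : R.b n * R.err (n + 1) ≠ 0 := by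
      rw [h]
      exact mul_ne_zero (neg_ne_zero.2 (R.rem_succ_ne_zero hn)) (ih (le_trans (by simp) hn))
    exact_mod_cast right_ne_zero_of_mul hne

lemma norm_err_succ_le (hn : ((n + 1 : ℕ) : ℕ∞) ≤ N) : ‖R.err (n + 1)‖ ≤ ε * ‖R.err n‖ := by
  have hb : 0 < ‖R.b n‖ := norm_pos_iff.2 (R.b_ne_zero hn)
  have h := congrArg norm (R.b_mul_err_succ hn)
  rw [norm_mul, norm_mul, norm_neg] at h
  refine le_of_mul_le_mul_left ?_ hb
  calc ‖R.b n‖ * ‖R.err (n + 1)‖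
      = ‖R.b (n + 1) * R.zs n - R.a (n + 1)‖ * ‖R.err n‖ := h
    _ ≤ ε * ‖R.b n‖ * ‖R.err n‖ := by gcongr; exact R.norm_rem_succ_le hn
    _ = ‖R.b n‖ * (ε * ‖R.err n‖) := by ring

lemma norm_err_le (hn : (n : ℕ∞) ≤ N) : ‖R.err n‖ ≤ ε ^ n := by
  induction n with
  | zero => simp [R.err_zero]
  | succ n ih =>
    have hn' : (n : ℕ∞) ≤ N := le_trans (by simp) hn
    have h := R.norm_err_succ_le hn
    have hε : 0 ≤ ε := nonneg_of_mul_nonneg_left ((norm_nonneg _).trans h)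
      (norm_pos_iff.2 (R.err_ne_zero hn'))
    calc ‖R.err ((n + 1 : ℕ) : ℤ)‖ ≤ ε * ‖R.err n‖ := by exact_mod_cast h
      _ ≤ ε * ε ^ n := by gcongr; exact ih hn'
      _ = ε ^ (n + 1) := by ring

lemma p_mem (hn : (n : ℕ∞) ≤ N) : R.p n ∈ O Δ := by
  cases n with
  | zero => simp [R.p_zero]
  | succ n => exact R.hpO (n + 1) n.succ_pos hn

lemma q_mem (hn : (n : ℕ∞) ≤ N) : R.q n ∈ O Δ := by
  cases n with
  | zero => simp [R.q_zero]
  | succ n => exact R.hqO (n + 1) n.succ_pos hn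

end Run

lemma Run.one_le_pow_mul_norm {Δ : ℤ} (hΔ : Δ ≤ 0) (hΔmod : Δ % 4 = 0 ∨ Δ % 4 = 1)
    {B : Set ℂ} {ε : ℝ} {p q : ℂ} (hp : p ∈ O Δ) (hq : q ∈ O Δ) (hq0 : q ≠ 0) {N : ℕ∞}
    (R : Run Δ B ε (p / q) N) {n : ℕ} (hn : (n : ℕ∞) ≤ N) : 1 ≤ ε ^ n * ‖q‖ := by
  have hmem : q * R.err n ∈ O Δ := by
    have h : q * R.err n = R.q n * p - R.p n * q := by
      simp only [Run.err]
      field_simp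
    rw [h]
    exact sub_mem (mul_mem (R.q_mem hn) hp) (mul_mem (R.p_mem hn) hq)
  calc 1 ≤ ‖q * R.err n‖ :=
        one_le_norm_of_mem_O hΔ hΔmod hmem (mul_ne_zero hq0 (R.err_ne_zero hn))
    _ = ‖R.err n‖ * ‖q‖ := by rw [norm_mul, mul_comm]
    _ ≤ ε ^ n * ‖q‖ := by gcongr; exact R.norm_err_le hn

theorem stmt3_general (Δ : ℤ) (hΔneg : Δ < 0) (hΔmod : Δ % 4 = 0 ∨ Δ % 4 = 1)
    (B : Set ℂ) (ε : ℝ) (hε1 : ε < 1)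
    (p q : ℂ) (hp : p ∈ O Δ) (hq : q ∈ O Δ) (hq0 : q ≠ 0)
    (N : ℕ∞) (R : Run Δ B ε (p / q) N) :
    ∃ n : ℕ, N = (n : ℕ∞) ∧ 1 ≤ ε ^ n * ‖q‖ := by
  have hbound : ∀ n : ℕ, (n : ℕ∞) ≤ N → 1 ≤ ε ^ n * ‖q‖ := fun n hn =>
    R.one_le_pow_mul_norm hΔneg.le hΔmod hp hq hq0 hn
  have hfinite : N ≠ ⊤ := by
    rintro rfl
    have hq' : 0 < ‖q‖ := norm_pos_iff.2 hq0
    obtain ⟨n, hn⟩ := exists_pow_lt_of_lt_one (inv_pos.2 hq') hε1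
    have hsmall : ε ^ n * ‖q‖ < 1 := by
      simpa [inv_mul_cancel₀ hq'.ne'] using mul_lt_mul_of_pos_right hn hq'
    exact (hbound n le_top).not_gt hsmall
  obtain ⟨n, rfl⟩ := ENat.ne_top_iff_exists.1 hfinite
  exact ⟨n, rfl, hbound n le_rfl⟩

theorem stmt3 (Δ : ℤ) (hΔneg : Δ < 0) (hΔmod : Δ % 4 = 0 ∨ Δ % 4 = 1)
    (B : Set ℂ) (ε : ℝ) (hε0 : 0 < ε) (hε1 : ε < 1) (hadm : Admissible Δ B ε)
    (p q : ℂ) (hp : p ∈ O Δ) (hq : q ∈ O Δ) (hq0 : q ≠ 0)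
    (N : ℕ∞) (R : Run Δ B ε (p / q) N) :
    ∃ n : ℕ, N = (n : ℕ∞) ∧ 1 ≤ ε ^ n * ‖q‖ :=
  stmt3_general Δ hΔneg hΔmod B ε hε1 p q hp hq hq0 N R

end CFNE
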